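/- arXiv:1104.2054 — 5 statements merged into one kernel-verified Lean document; each statement's English description precedes it below -/
import Mathlib

section
/- If G is a non-abelian subgroup of H(n,ℂ) containing some element with linear part λ with |λ| ≠ 1, then 0 lies in the closure of Λ_G ⊆ ℂ. -/
/-! The linear parts of a group of homotheties form a multiplicative monoid in which every nonzero
element is invertible. If some linear part has `‖λ‖ ≠ 1`, then `λ` or `λ⁻¹` has norm `< 1`, and
its powers, all of them linear parts, tend to `0`. -/

theorem zero_mem_closure_of_norm_lt_one {R : Type*} [SeminormedRing R] (S : Submonoid R) {μ : R}
    (hμS : μ ∈ S) (hμ : ‖μ‖ < 1) : (0 : R) ∈ closure (S : Set R) :=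
  mem_closure_of_tendsto (tendsto_pow_atTop_nhds_zero_of_norm_lt_one hμ)
    (Filter.Eventually.of_forall fun k => pow_mem hμS k)

namespace AffineEquiv

variable {V : Type*} [AddCommGroup V]

section Field

variable {k : Type*} [Field k] [Module k V]

def homothetyRatios (G : Subgroup (V ≃ᵃ[k] V)) : Submonoid k where
  carrier := {l | ∃ f ∈ G, ∃ c : V, ∀ z, f z = l • z + c}
  one_mem' := ⟨1, G.one_mem, 0, fun z => by simp⟩
  mul_mem' := by
    rintro l₁ l₂ ⟨f₁, hf₁G, c₁, hf₁⟩ ⟨f₂, hf₂G, c₂, hf₂⟩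
    refine ⟨f₁ * f₂, G.mul_mem hf₁G hf₂G, l₁ • c₂ + c₁, fun z => ?_⟩
    rw [coe_mul, Function.comp_apply, hf₂, hf₁, smul_add, smul_smul, add_assoc]

theorem inv_mem_homothetyRatios {G : Subgroup (V ≃ᵃ[k] V)} {l : k}
    (hl : l ∈ homothetyRatios G) (hl0 : l ≠ 0) : l⁻¹ ∈ homothetyRatios G := by
  obtain ⟨f, hfG, c, hf⟩ := hl
  refine ⟨f⁻¹, G.inv_mem hfG, -(l⁻¹ • c), fun z => ?_⟩
  have hz : z = f (l⁻¹ • z + -(l⁻¹ • c)) := by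
    rw [hf, smul_add, smul_smul, mul_inv_cancel₀ hl0, one_smul, smul_neg, smul_smul,
      mul_inv_cancel₀ hl0, one_smul, neg_add_cancel_right]
  conv_lhs => rw [hz]
  exact f.symm_apply_apply _

end Field

theorem exists_mem_homothetyRatios_norm_lt_one {k : Type*} [NormedField k] [Module k V]
    {G : Subgroup (V ≃ᵃ[k] V)} {l : k} (hl : l ∈ homothetyRatios G) (hl1 : ‖l‖ ≠ 1) :
    ∃ μ ∈ homothetyRatios G, ‖μ‖ < 1 := by
  rcases hl1.lt_or_gt with hlt | hgt
  · exact ⟨l, hl, hlt⟩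
  · have hl0 : l ≠ 0 := norm_pos_iff.mp (one_pos.trans hgt)
    exact ⟨l⁻¹, inv_mem_homothetyRatios hl hl0, by rw [norm_inv]; exact inv_lt_one_of_one_lt₀ hgt⟩

end AffineEquiv

theorem stmt3_general {n : ℕ} (G : Subgroup ((Fin n → ℂ) ≃ᵃ[ℂ] (Fin n → ℂ)))
    (hex : ∃ f ∈ G, ∃ (l : ℂ) (c : Fin n → ℂ),
      (∀ z, f z = l • z + c) ∧ ‖l‖ ≠ 1) :
    (0 : ℂ) ∈ closure {l : ℂ | ∃ f ∈ G, ∃ c : Fin n → ℂ, ∀ z : Fin n → ℂ, f z = l • z + c} := by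
  obtain ⟨f, hfG, l, c, hf, hl1⟩ := hex
  obtain ⟨μ, hμS, hμ⟩ :=
    AffineEquiv.exists_mem_homothetyRatios_norm_lt_one (G := G) ⟨f, hfG, c, hf⟩ hl1
  exact zero_mem_closure_of_norm_lt_one (AffineEquiv.homothetyRatios G) hμS hμ

/-- If G is a non-abelian subgroup of H(n,ℂ) containing some element with linear part λ
with |λ| ≠ 1, then 0 lies in the closure of Λ_G ⊆ ℂ. -/
theorem stmt3 {n : ℕ} (G : Subgroup ((Fin n → ℂ) ≃ᵃ[ℂ] (Fin n → ℂ)))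
    (hG : ∀ f ∈ G, ∃ (l : ℂ) (c : Fin n → ℂ), l ≠ 0 ∧ ∀ z, f z = l • z + c)
    (hna : ∃ f ∈ G, ∃ g ∈ G, f * g ≠ g * f)
    (hex : ∃ f ∈ G, ∃ (l : ℂ) (c : Fin n → ℂ),
      (∀ z, f z = l • z + c) ∧ ‖l‖ ≠ 1) :
    (0 : ℂ) ∈ closure {l : ℂ | ∃ f ∈ G, ∃ c : Fin n → ℂ, ∀ z : Fin n → ℂ, f z = l • z + c} :=
  stmt3_general G hex
end

section
/- If G is a non-abelian subgroup of H(n,ℂ), then there exist f, g ∈ G, neither of which is a translation, with distinct fixed points (centers). -/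
/-!
Write `f z = l • z + c` and `g z = m • z + d`. Then `f ∘ g` and `g ∘ f` have the same linear part,
and they agree iff `(1 - l) • d = (1 - m) • c`. If neither `f` nor `g` is a translation, their
centers are `(1 - l)⁻¹ • c` and `(1 - m)⁻¹ • d`, and equal centers would force this identity.
If `f` is a translation by `c`, non-commutation forces `c ≠ 0` and `m ≠ 1`; then `g` and its
conjugate `f g f⁻¹` are non-translations whose centers differ by `c`.
-/

namespace AffineEquiv

variable {k V : Type*} [Field k] [AddCommGroup V] [Module k V]

theorem smul_add_eq_smul_sub_center {l : k} (hl : l ≠ 1) (c z : V) :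
    l • z + c = l • (z - (1 - l)⁻¹ • c) + (1 - l)⁻¹ • c := by
  conv_lhs => rw [← smul_inv_smul₀ (sub_ne_zero.mpr hl.symm) c]
  module

theorem commute_of_smul_eq {f g : V ≃ᵃ[k] V} {l m : k} {c d : V}
    (hf : ∀ z, f z = l • z + c) (hg : ∀ z, g z = m • z + d) (h : (1 - l) • d = (1 - m) • c) :
    f * g = g * f := by
  ext z
  simp only [coe_mul, Function.comp_apply, hf, hg]
  linear_combination (norm := module) (-1 : k) • h

theorem conj_translation_apply {f g : V ≃ᵃ[k] V} {m : k} {b c : V}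
    (hf : ∀ z, f z = z + c) (hg : ∀ z, g z = m • (z - b) + b) (z : V) :
    (f * g * f⁻¹) z = m • (z - (b + c)) + (b + c) := by
  have hinv : f⁻¹ z = z - c := f.injective (by rw [inv_def, apply_symm_apply, hf, sub_add_cancel])
  rw [coe_mul, coe_mul, Function.comp_apply, Function.comp_apply, hinv, hg, hf]
  module

variable {G : Subgroup (V ≃ᵃ[k] V)}

theorem exists_ne_centers_of_translation {f g : V ≃ᵃ[k] V} (hfG : f ∈ G) (hgG : g ∈ G)
    {m : k} {c d : V} (hf : ∀ z, f z = z + c) (hg : ∀ z, g z = m • z + d) (hfg : f * g ≠ g * f) :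
    ∃ f ∈ G, ∃ g ∈ G, ∃ (a b : V) (l m : k), l ≠ 1 ∧ m ≠ 1 ∧
      (∀ z, f z = l • (z - a) + a) ∧ (∀ z, g z = m • (z - b) + b) ∧ a ≠ b := by
  have hf' : ∀ z, f z = (1 : k) • z + c := by simpa only [one_smul] using hf
  have hm : m ≠ 1 := by
    rintro rfl
    exact hfg (commute_of_smul_eq hf' hg (by simp))
  have hc : c ≠ 0 := by
    rintro rfl
    exact hfg (commute_of_smul_eq hf' hg (by simp))
  set b := (1 - m)⁻¹ • d
  have hg' : ∀ z, g z = m • (z - b) + b := fun z ↦ (hg z).trans (smul_add_eq_smul_sub_center hm d z)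
  refine ⟨g, hgG, f * g * f⁻¹, G.mul_mem (G.mul_mem hfG hgG) (G.inv_mem hfG), b, b + c, m, m,
    hm, hm, hg', conj_translation_apply hf hg', fun h ↦ hc ?_⟩
  simpa using h.symm

theorem exists_ne_centers_of_not_commute
    (hG : ∀ f ∈ G, ∃ (l : k) (c : V), ∀ z, f z = l • z + c)
    {f g : V ≃ᵃ[k] V} (hfG : f ∈ G) (hgG : g ∈ G) (hfg : f * g ≠ g * f) :
    ∃ f ∈ G, ∃ g ∈ G, ∃ (a b : V) (l m : k), l ≠ 1 ∧ m ≠ 1 ∧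
      (∀ z, f z = l • (z - a) + a) ∧ (∀ z, g z = m • (z - b) + b) ∧ a ≠ b := by
  obtain ⟨l, c, hf⟩ := hG f hfG
  obtain ⟨m, d, hg⟩ := hG g hgG
  rcases eq_or_ne l 1 with rfl | hl
  · exact exists_ne_centers_of_translation hfG hgG (by simpa only [one_smul] using hf) hg hfg
  rcases eq_or_ne m 1 with rfl | hm
  · exact exists_ne_centers_of_translation hgG hfG (by simpa only [one_smul] using hg) hf hfg.symm
  refine ⟨f, hfG, g, hgG, _, _, l, m, hl, hm,
    fun z ↦ (hf z).trans (smul_add_eq_smul_sub_center hl c z),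
    fun z ↦ (hg z).trans (smul_add_eq_smul_sub_center hm d z), fun hab ↦ hfg ?_⟩
  refine commute_of_smul_eq hf hg ?_
  rw [← smul_inv_smul₀ (sub_ne_zero.mpr hl.symm) c, ← smul_inv_smul₀ (sub_ne_zero.mpr hm.symm) d,
    ← hab, smul_comm]

end AffineEquiv

/-- If G is a non-abelian subgroup of H(n,ℂ), then there exist f, g ∈ G, neither of
which is a translation, with distinct centers. -/
theorem stmt5 {n : ℕ} (G : Subgroup ((Fin n → ℂ) ≃ᵃ[ℂ] (Fin n → ℂ)))
    (hG : ∀ f ∈ G, ∃ (l : ℂ) (c : Fin n → ℂ), l ≠ 0 ∧ ∀ z, f z = l • z + c)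
    (hna : ∃ f ∈ G, ∃ g ∈ G, f * g ≠ g * f) :
    ∃ f ∈ G, ∃ g ∈ G, ∃ (a b : Fin n → ℂ) (l m : ℂ), l ≠ 1 ∧ m ≠ 1 ∧
      (∀ z, f z = l • (z - a) + a) ∧ (∀ z, g z = m • (z - b) + b) ∧ a ≠ b := by
  obtain ⟨f, hfG, g, hgG, hfg⟩ := hna
  refine AffineEquiv.exists_ne_centers_of_not_commute (fun f hf ↦ ?_) hfG hgG hfg
  obtain ⟨l, c, -, h⟩ := hG f hf
  exact ⟨l, c, h⟩
end

section
/- Let λ ∈ ℂ with |λ| > 1 (or |λ| < 1), λ ∉ ℝ, a ≠ b in ℂ, and let G be the group generated by f(z) = λ(z−a)+a and g(z) = λ(z−b)+b. Then the subgroup of translations contained in G has dense orbit of 0 in ℂ(b−a): the closure of {T(0) : T ∈ G, T a translation} equals ℂ(b−a). -/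
/-!
Write `f z = λ z + (1 - λ) a` and `g z = λ z + (1 - λ) b`. The translation vectors of `G` form an
additive subgroup `S`; it contains `c = (1 - λ)(b - a) ≠ 0` (the translation `g f⁻¹`), and conjugating a
translation by `f` or `f⁻¹` multiplies its vector by `λ` or `λ⁻¹`. Choosing `μ ∈ {λ, λ⁻¹}` with
`|μ| < 1`, the vectors `μⁿ c` and `μⁿ⁺¹ c` lie in `S`, are `ℝ`-linearly independent since `μ ∉ ℝ`,
and span a lattice of mesh `O(|μ|ⁿ)`, so `S` is dense in `ℂ = ℂ (b - a)`.
-/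

open Complex

section TranslationVectors

variable {k V : Type*} [Ring k] [AddCommGroup V] [Module k V]

def Subgroup.translationVectors (H : Subgroup (V ≃ᵃ[k] V)) : AddSubgroup V where
  carrier := {c | ∃ T ∈ H, ∀ z, T z = z + c}
  zero_mem' := ⟨1, H.one_mem, fun z => by simp⟩
  add_mem' := by
    rintro c₁ c₂ ⟨T₁, hT₁, h₁⟩ ⟨T₂, hT₂, h₂⟩
    refine ⟨T₁ * T₂, H.mul_mem hT₁ hT₂, fun z => ?_⟩
    rw [AffineEquiv.coe_mul, Function.comp_apply, h₂, h₁, add_assoc, add_comm c₂]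
  neg_mem' := by
    rintro c ⟨T, hT, h⟩
    refine ⟨T⁻¹, H.inv_mem hT, fun z => ?_⟩
    rw [AffineEquiv.inv_def, eq_comm, AffineEquiv.eq_symm_apply, h, neg_add_cancel_right]

variable {H : Subgroup (V ≃ᵃ[k] V)}

theorem Subgroup.sub_mem_translationVectors {A B : V ≃ᵃ[k] V} (hA : A ∈ H) (hB : B ∈ H)
    {μ : k} {d e : V} (hAz : ∀ z, A z = μ • z + d) (hBz : ∀ z, B z = μ • z + e) :
    e - d ∈ H.translationVectors := by
  refine ⟨B * A⁻¹, H.mul_mem hB (H.inv_mem hA), fun z => ?_⟩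
  have hz : μ • A⁻¹ z = z - d := by
    rw [eq_sub_iff_add_eq, ← hAz, AffineEquiv.inv_def, AffineEquiv.apply_symm_apply]
  rw [AffineEquiv.coe_mul, Function.comp_apply, hBz, hz]
  abel

theorem Subgroup.smul_mem_translationVectors {A : V ≃ᵃ[k] V} (hA : A ∈ H) {μ : k} {d : V}
    (hAz : ∀ z, A z = μ • z + d) {c : V} (hc : c ∈ H.translationVectors) :
    μ • c ∈ H.translationVectors := by
  obtain ⟨T, hT, hTz⟩ := hc
  refine ⟨A * T * A⁻¹, H.mul_mem (H.mul_mem hA hT) (H.inv_mem hA), fun z => ?_⟩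
  have hz : μ • A⁻¹ z + d = z := by rw [← hAz]; exact A.apply_symm_apply z
  rw [AffineEquiv.coe_mul, AffineEquiv.coe_mul, Function.comp_apply, Function.comp_apply, hTz,
    hAz, smul_add, add_right_comm, hz]

end TranslationVectors

theorem AffineEquiv.inv_apply_eq_inv_smul_sub {k V : Type*} [DivisionRing k] [AddCommGroup V]
    [Module k V] {A : V ≃ᵃ[k] V} {μ : k} (hμ : μ ≠ 0) {d : V} (hAz : ∀ z, A z = μ • z + d)
    (z : V) : A⁻¹ z = μ⁻¹ • z + -(μ⁻¹ • d) := by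
  rw [AffineEquiv.inv_def, eq_comm, AffineEquiv.eq_symm_apply, hAz, ← sub_eq_add_neg, ← smul_sub,
    smul_smul, mul_inv_cancel₀ hμ, one_smul, sub_add_cancel]

theorem Complex.exists_int_add_int_mul_near {μ : ℂ} (hμ : μ.im ≠ 0) (w : ℂ) :
    ∃ m k : ℤ, ‖m + k * μ - w‖ ≤ 1 + ‖μ‖ := by
  set t : ℝ := w.im / μ.im
  set s : ℝ := w.re - t * μ.re
  have hw : w = s + t * μ := by
    apply Complex.ext <;> simp [s, t, hμ]
  refine ⟨⌊s⌋, ⌊t⌋, ?_⟩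
  have hs : |(⌊s⌋ - s : ℝ)| ≤ 1 := by
    rw [abs_le]; constructor <;> linarith [Int.floor_le s, Int.lt_floor_add_one s]
  have ht : |(⌊t⌋ - t : ℝ)| ≤ 1 := by
    rw [abs_le]; constructor <;> linarith [Int.floor_le t, Int.lt_floor_add_one t]
  calc ‖(⌊s⌋ : ℂ) + ⌊t⌋ * μ - w‖ = ‖((⌊s⌋ - s : ℝ) : ℂ) + ((⌊t⌋ - t : ℝ) : ℂ) * μ‖ := by
        rw [hw]; push_cast; ring_nf
    _ ≤ |(⌊s⌋ - s : ℝ)| + |(⌊t⌋ - t : ℝ)| * ‖μ‖ := by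
        refine (norm_add_le _ _).trans ?_
        rw [norm_mul, Complex.norm_real, Complex.norm_real, Real.norm_eq_abs, Real.norm_eq_abs]
    _ ≤ 1 + ‖μ‖ := by gcongr; exact mul_le_of_le_one_left (norm_nonneg μ) ht

theorem AddSubgroup.dense_of_mul_mem {S : AddSubgroup ℂ} {μ c : ℂ} (hμ : μ.im ≠ 0)
    (hμ1 : ‖μ‖ < 1) (hc0 : c ≠ 0) (hc : c ∈ S) (hS : ∀ x ∈ S, μ * x ∈ S) :
    Dense (S : Set ℂ) := by
  have hpow : ∀ n : ℕ, μ ^ n * c ∈ S := by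
    intro n
    induction n with
    | zero => simpa using hc
    | succ n ih => simpa [pow_succ', mul_assoc] using hS _ ih
  rw [Metric.dense_iff]
  intro w ε hε
  obtain ⟨n, hn⟩ : ∃ n : ℕ, ‖μ‖ ^ n * ((1 + ‖μ‖) * ‖c‖) < ε := by
    have h := (tendsto_pow_atTop_nhds_zero_of_lt_one (norm_nonneg μ) hμ1).mul_const
      ((1 + ‖μ‖) * ‖c‖)
    rw [zero_mul] at h
    exact (h.eventually (gt_mem_nhds hε)).exists
  have hd0 : μ ^ n * c ≠ 0 := mul_ne_zero (pow_ne_zero n (by rintro rfl; simp at hμ)) hc0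
  obtain ⟨m, k, hmk⟩ := exists_int_add_int_mul_near hμ (w / (μ ^ n * c))
  refine ⟨m * (μ ^ n * c) + k * (μ * (μ ^ n * c)), Metric.mem_ball.2 ?_, ?_⟩
  · calc dist (m * (μ ^ n * c) + k * (μ * (μ ^ n * c))) w
          = ‖(m + k * μ - w / (μ ^ n * c)) * (μ ^ n * c)‖ := by
            rw [dist_eq_norm, sub_mul, div_mul_cancel₀ w hd0]
            ring_nf
      _ = ‖m + k * μ - w / (μ ^ n * c)‖ * (‖μ‖ ^ n * ‖c‖) := by rw [norm_mul, norm_mul, norm_pow]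
      _ ≤ (1 + ‖μ‖) * (‖μ‖ ^ n * ‖c‖) := by gcongr
      _ < ε := by linarith
  · exact S.add_mem (by simpa using S.zsmul_mem (hpow n) m)
      (by simpa using S.zsmul_mem (hS _ (hpow n)) k)

/-- Let |λ| ≠ 1, λ ∉ ℝ, a ≠ b in ℂ, and G the group generated by f(z) = λ(z−a)+a and
g(z) = λ(z−b)+b. Then the set G₁(0) of translation vectors occurring in G has closure
equal to the real plane ℂ(b−a). -/
theorem stmt11 (lam : ℂ) (habs : ‖lam‖ ≠ 1) (him : lam.im ≠ 0)
    (a b : ℂ) (hab : a ≠ b) (f g : ℂ ≃ᵃ[ℂ] ℂ)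
    (hf : ∀ z, f z = lam * (z - a) + a) (hg : ∀ z, g z = lam * (z - b) + b) :
    closure {c : ℂ | ∃ T ∈ Subgroup.closure {f, g}, ∀ z : ℂ, T z = z + c}
      = {w : ℂ | ∃ α : ℂ, w = α * (b - a)} := by
  set G := Subgroup.closure ({f, g} : Set (ℂ ≃ᵃ[ℂ] ℂ))
  have hfG : f ∈ G := Subgroup.subset_closure (by simp)
  have hgG : g ∈ G := Subgroup.subset_closure (by simp)
  have hlam0 : lam ≠ 0 := by rintro rfl; simp at him
  have hfz : ∀ z, f z = lam • z + (1 - lam) * a := fun z => by rw [hf, smul_eq_mul]; ring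
  have hgz : ∀ z, g z = lam • z + (1 - lam) * b := fun z => by rw [hg, smul_eq_mul]; ring
  have hc : (1 - lam) * b - (1 - lam) * a ∈ G.translationVectors :=
    G.sub_mem_translationVectors hfG hgG hfz hgz
  have hc0 : (1 - lam) * b - (1 - lam) * a ≠ 0 := by
    rw [← mul_sub]
    exact mul_ne_zero (sub_ne_zero.2 fun h => by simp [← h] at him) (sub_ne_zero.2 hab.symm)
  have hdense : Dense (G.translationVectors : Set ℂ) := by
    rcases habs.lt_or_gt with hlt | hgt
    · exact AddSubgroup.dense_of_mul_mem him hlt hc0 hc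
        fun x hx => G.smul_mem_translationVectors hfG hfz hx
    · refine AddSubgroup.dense_of_mul_mem (μ := lam⁻¹) (by simp [Complex.inv_im, him, hlam0])
        (by rw [norm_inv]; exact inv_lt_one_of_one_lt₀ hgt) hc0 hc fun x hx => ?_
      exact G.smul_mem_translationVectors (G.inv_mem hfG)
        (AffineEquiv.inv_apply_eq_inv_smul_sub hlam0 hfz) hx
  refine hdense.closure_eq.trans (Set.eq_univ_of_forall fun w => ?_).symm
  exact ⟨w / (b - a), (div_mul_cancel₀ w (sub_ne_zero.2 hab.symm)).symm⟩
end

section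
/- Let θ ∈ ℝ with θ/π irrational, a ≠ b in ℂ, and let G be the group generated by the rotation-type maps f(z) = e^{iθ}(z−a)+a and g(z) = e^{iθ}(z−b)+b. Then the orbit G(a) = {h(a) : h ∈ G} is dense in ℂ (after identifying the affine line through a, b with ℂ). -/
/-!
The map `g ∘ f⁻¹` is the translation by `v = (e^{iθ} - 1)(a - b) ≠ 0`, and conjugating a
translation by `f` multiplies its vector by `e^{iθ}`. Hence the translation vectors of `G` form an
additive subgroup `T ∋ v` stable under multiplication by the powers of `e^{iθ}`, which are dense in
the unit circle. The multipliers preserving the closure of `T` then form a closed subring of `ℂ`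
containing the unit circle, which is all of `ℂ`; so `T` is dense, and so is `G(a) ⊇ a + T`.
-/

open Complex AffineEquiv

namespace AffineEquiv

variable {k V P : Type*} [CommRing k] [AddCommGroup V] [Module k V] [AddTorsor V P]

def translationAddSubgroup (G : Subgroup (P ≃ᵃ[k] P)) : AddSubgroup V :=
  (G.comap (constVAddHom k P)).toAddSubgroup'

theorem mem_translationAddSubgroup {G : Subgroup (P ≃ᵃ[k] P)} {v : V} :
    v ∈ translationAddSubgroup G ↔ constVAdd k P v ∈ G :=
  Iff.rfl

theorem homothety_mul_constVAdd_mul_inv (c : P) (u : kˣ) (v : V) :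
    homothetyUnitsMulHom c u * constVAdd k P v * (homothetyUnitsMulHom c u)⁻¹ =
      constVAdd k P ((u : k) • v) := by
  ext p
  change AffineMap.homothety c (u : k) (v +ᵥ AffineMap.homothety c (↑u⁻¹ : k) p) = _
  simp [AffineMap.homothety_apply, smul_smul]

theorem homothety_mul_inv_homothety (b c : P) (u : kˣ) :
    homothetyUnitsMulHom b u * (homothetyUnitsMulHom c u)⁻¹ =
      constVAdd k P (((u : k) - 1) • (c -ᵥ b)) := by
  ext p
  change AffineMap.homothety b (u : k) (AffineMap.homothety c (↑u⁻¹ : k) p) = _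
  simp only [AffineMap.homothety_apply, constVAdd_apply, vadd_vsub_assoc, smul_add, smul_smul,
    Units.mul_inv, one_smul]
  rw [eq_vadd_iff_vsub_eq, vadd_vsub_assoc, ← neg_vsub_eq_vsub_rev p b,
    ← vsub_sub_vsub_cancel_right p c b]
  module

theorem smul_mem_translationAddSubgroup {G : Subgroup (P ≃ᵃ[k] P)} {c : P} {u : kˣ}
    (hu : homothetyUnitsMulHom c u ∈ G) {v : V} (hv : v ∈ translationAddSubgroup G) :
    (u : k) • v ∈ translationAddSubgroup G := by
  rw [mem_translationAddSubgroup, ← homothety_mul_constVAdd_mul_inv]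
  exact mul_mem (mul_mem hu hv) (inv_mem hu)

end AffineEquiv

def AddSubgroup.mulStabilizer {R : Type*} [Ring R] (A : AddSubgroup R) : Subring R where
  carrier := {c | ∀ x ∈ A, c * x ∈ A}
  mul_mem' {c d} hc hd x hx := mul_assoc c d x ▸ hc _ (hd x hx)
  one_mem' x hx := (one_mul x).symm ▸ hx
  add_mem' {c d} hc hd x hx := (add_mul c d x).symm ▸ add_mem (hc x hx) (hd x hx)
  zero_mem' x _ := (zero_mul x).symm ▸ zero_mem A
  neg_mem' {c} hc x hx := (neg_mul c x).symm ▸ neg_mem (hc x hx)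

theorem AddSubgroup.isClosed_mulStabilizer {R : Type*} [Ring R] [TopologicalSpace R]
    [ContinuousMul R] {A : AddSubgroup R} (hA : IsClosed (A : Set R)) :
    IsClosed (A.mulStabilizer : Set R) := by
  have : (A.mulStabilizer : Set R) = ⋂ x ∈ A, (· * x) ⁻¹' A := by
    ext c; simp [AddSubgroup.mulStabilizer]
  rw [this]
  exact isClosed_biInter fun x _ => hA.preimage (continuous_mul_const x)

namespace Complex

theorem exp_mul_I_ne_one_of_irrational {θ : ℝ} (hθ : Irrational (θ / Real.pi)) :
    exp (θ * I) ≠ 1 := by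
  rw [Ne, exp_eq_one_iff]
  rintro ⟨n, hn⟩
  have hθn : θ = 2 * n * Real.pi := ofReal_injective <| by
    push_cast
    exact mul_right_cancel₀ I_ne_zero (hn.trans (by ring))
  exact hθ ⟨2 * n, by rw [hθn]; push_cast; field_simp⟩

theorem exp_mul_I_mem_closure_range_zpow {θ : ℝ} (hθ : Irrational (θ / Real.pi)) (r : ℝ) :
    exp (r * I) ∈ closure (Set.range fun n : ℤ => exp (θ * I) ^ n) := by
  have hdense : Dense (AddSubgroup.closure {θ, 2 * Real.pi} : Set ℝ) := by
    rw [dense_addSubgroupClosure_pair_iff, ← div_div, div_right_comm]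
    simpa using hθ.div_natCast (m := 2) two_ne_zero
  refine map_mem_closure (f := fun s : ℝ => exp (s * I)) (by fun_prop) (hdense r) ?_
  intro s hs
  obtain ⟨m, n, rfl⟩ := AddSubgroup.mem_closure_pair.1 hs
  refine ⟨m, ?_⟩
  simp only [zsmul_eq_mul]
  push_cast
  rw [add_mul, exp_add, mul_assoc, ← exp_int_mul, mul_assoc, exp_int_mul_two_pi_mul_I, mul_one]

theorem _root_.Subring.eq_top_of_forall_exp_mul_I_mem {S : Subring ℂ}
    (hS : ∀ r : ℝ, exp (r * I) ∈ S) : S = ⊤ := by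
  have hsmall : ∀ r : ℝ, |r| ≤ 2 → (r : ℂ) ∈ S := by
    intro r hr
    rw [abs_le] at hr
    have hcos : 2 * cos (Real.arccos (r / 2)) = r := by
      rw [← ofReal_cos, Real.cos_arccos (by linarith) (by linarith)]; push_cast; ring
    rw [← hcos, two_cos, ← ofReal_neg]
    exact add_mem (hS _) (hS _)
  have hreal : ∀ r : ℝ, (r : ℂ) ∈ S := by
    intro r
    obtain ⟨n, hn⟩ := exists_nat_gt |r|
    have hn0 : (0 : ℝ) < n := (abs_nonneg r).trans_lt hn
    have hsmall' : ((r / n : ℝ) : ℂ) ∈ S := hsmall _ <| by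
      rw [abs_div, Nat.abs_cast, div_le_iff₀ hn0]; linarith
    have := mul_mem (natCast_mem S n) hsmall'
    rwa [ofReal_div, ofReal_natCast, mul_div_cancel₀ _ (by exact_mod_cast hn0.ne')] at this
  have hI : I ∈ S := by simpa using hS (Real.pi / 2)
  refine eq_top_iff.2 fun z _ => ?_
  rw [← re_add_im z]
  exact add_mem (hreal _) (mul_mem (hreal _) hI)

theorem dense_of_zpow_mul_mem {θ : ℝ} (hθ : Irrational (θ / Real.pi)) {A : AddSubgroup ℂ}
    (hA : ∀ n : ℤ, ∀ x ∈ A, exp (θ * I) ^ n * x ∈ A) {v : ℂ} (hv : v ∈ A) (hv0 : v ≠ 0) :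
    Dense (A : Set ℂ) := by
  set C := A.topologicalClosure
  have hpow : Set.range (fun n : ℤ => exp (θ * I) ^ n) ⊆ C.mulStabilizer := by
    rintro _ ⟨n, rfl⟩ x hx
    exact map_mem_closure (continuous_const_mul _) hx (hA n)
  have htop : C.mulStabilizer = ⊤ := Subring.eq_top_of_forall_exp_mul_I_mem fun r =>
    closure_minimal hpow (AddSubgroup.isClosed_mulStabilizer A.isClosed_topologicalClosure)
      (exp_mul_I_mem_closure_range_zpow hθ r)
  intro w
  have : w / v * v ∈ C := (htop ▸ Subring.mem_top (w / v) : w / v ∈ C.mulStabilizer) v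
    (subset_closure hv)
  rwa [div_mul_cancel₀ w hv0] at this

end Complex

/-- Let θ/π be irrational, a ≠ b in ℂ, and G the group generated by
f(z) = e^{iθ}(z−a)+a and g(z) = e^{iθ}(z−b)+b. Then the orbit G(a) is dense in ℂ. -/
theorem stmt12 (θ : ℝ) (hθ : Irrational (θ / Real.pi)) (a b : ℂ) (hab : a ≠ b)
    (f g : ℂ ≃ᵃ[ℂ] ℂ)
    (hf : ∀ z, f z = Complex.exp (θ * Complex.I) * (z - a) + a)
    (hg : ∀ z, g z = Complex.exp (θ * Complex.I) * (z - b) + b) :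
    Dense {w : ℂ | ∃ h ∈ Subgroup.closure {f, g}, h a = w} := by
  set u : ℂˣ := Units.mk0 (exp (θ * I)) (exp_ne_zero _)
  have hfu : f = homothetyUnitsMulHom a u := by
    ext z; simp [hf, AffineMap.homothety_apply, u]
  have hgu : g = homothetyUnitsMulHom b u := by
    ext z; simp [hg, AffineMap.homothety_apply, u]
  set G := Subgroup.closure {f, g}
  have hfG : f ∈ G := Subgroup.subset_closure (by simp)
  have hgG : g ∈ G := Subgroup.subset_closure (by simp)
  have hv : ((u : ℂ) - 1) • (a -ᵥ b) ∈ translationAddSubgroup G := by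
    rw [mem_translationAddSubgroup, ← homothety_mul_inv_homothety, ← hfu, ← hgu]
    exact mul_mem hgG (inv_mem hfG)
  have hv0 : ((u : ℂ) - 1) • (a -ᵥ b) ≠ 0 :=
    smul_ne_zero (sub_ne_zero.2 (exp_mul_I_ne_one_of_irrational hθ)) (sub_ne_zero.2 hab)
  have hpow (n : ℤ) (x : ℂ) (hx : x ∈ translationAddSubgroup G) :
      exp (θ * I) ^ n * x ∈ translationAddSubgroup G := by
    have hfn : homothetyUnitsMulHom a (u ^ n) ∈ G := by
      rw [map_zpow, ← hfu]; exact zpow_mem hfG n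
    simpa [Units.val_zpow_eq_zpow_val, u] using smul_mem_translationAddSubgroup hfn hx
  refine ((dense_of_zpow_mul_mem hθ hpow hv hv0).vadd a).mono ?_
  rintro _ ⟨s, hs, rfl⟩
  exact ⟨constVAdd ℂ ℂ s, hs, add_comm s a⟩
end

section
/- Let θ = π/2 (or more generally θ ∈ π/2 + πℤ), a ∈ ℂ*, and let G be the group generated by h(z) = e^{iθ}z and f(z) = e^{iθ}(z−a)+a. Then the lattice ℤ(1−e^{−iθ})a + ℤ(1−e^{iθ})a is invariant under both h and f, and hence G(0) ⊆ ℤ(1−e^{−iθ})a + ℤ(1−e^{iθ})a; in particular every orbit of G is discrete. -/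
/-! With u = e^{iθ} we have u² = -1, so multiplication by u sends the generators (1 - u⁻¹)a and
(1 - u)a of L to -(1 - u)a and (1 - u⁻¹)a: L is u-stable. Hence the maps z ↦ uⁿz + t with t ∈ L
form a group, which contains h (t = 0) and f (t = (1 - u)a), hence all of G. So G(0) ⊆ L, and
G(z) lies in the four translates uⁿz + L; since (1 ± u)a are ℝ-independent, L is a closed discrete
lattice, and a finite union of closed discrete sets is discrete. -/

open Submodule

section AffineSubgroup

variable {k : Type*} [CommRing k]

def latticeAffineSubgroup (C : Subgroup kˣ) (Λ : Submodule ℤ k)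
    (hC : ∀ c ∈ C, ∀ x ∈ Λ, (c : k) * x ∈ Λ) : Subgroup (k ≃ᵃ[k] k) where
  carrier := {g | ∃ c ∈ C, ∃ t ∈ Λ, ∀ z, g z = c * z + t}
  one_mem' := ⟨1, C.one_mem, 0, Λ.zero_mem, by simp⟩
  mul_mem' := by
    rintro g g' ⟨c, hc, t, ht, hg⟩ ⟨c', hc', t', ht', hg'⟩
    refine ⟨c * c', C.mul_mem hc hc', c * t' + t, Λ.add_mem (hC c hc t' ht') ht, fun z => ?_⟩
    simp only [AffineEquiv.coe_mul, Function.comp_apply, hg, hg', Units.val_mul]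
    ring
  inv_mem' := by
    rintro g ⟨c, hc, t, ht, hg⟩
    refine ⟨c⁻¹, C.inv_mem hc, c⁻¹ * -t, hC _ (C.inv_mem hc) _ (Λ.neg_mem ht), fun z => ?_⟩
    apply g.injective
    rw [AffineEquiv.inv_def, AffineEquiv.apply_symm_apply, hg, ← mul_add, ← mul_assoc,
      Units.mul_inv, one_mul, neg_add_cancel_right]

variable {C : Subgroup kˣ} {Λ : Submodule ℤ k} {hC : ∀ c ∈ C, ∀ x ∈ Λ, (c : k) * x ∈ Λ}
  {g : k ≃ᵃ[k] k}

theorem apply_mem_of_mem_latticeAffineSubgroup (hg : g ∈ latticeAffineSubgroup C Λ hC) {z : k}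
    (hz : z ∈ Λ) : g z ∈ Λ := by
  obtain ⟨c, hc, t, ht, hgz⟩ := hg
  rw [hgz]
  exact Λ.add_mem (hC c hc z hz) ht

theorem exists_apply_sub_mul_mem_of_mem_latticeAffineSubgroup
    (hg : g ∈ latticeAffineSubgroup C Λ hC) (z : k) : ∃ c ∈ C, g z - c * z ∈ Λ := by
  obtain ⟨c, hc, t, ht, hgz⟩ := hg
  exact ⟨c, hc, by rwa [hgz, add_sub_cancel_left]⟩

end AffineSubgroup

theorem IsDiscrete.biUnion_preimage_sub {X ι : Type*} [TopologicalSpace X] [AddGroup X]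
    [ContinuousSub X] {Λ : Set X} (hΛ : IsDiscrete Λ) (hΛc : IsClosed Λ) {I : Set ι}
    (hI : I.Finite) (v : ι → X) : IsDiscrete (⋃ i ∈ I, (· - v i) ⁻¹' Λ) :=
  .biUnion hI (fun i _ => hΛ.preimage (by fun_prop) (sub_left_injective))
    (fun i _ => hΛc.preimage (by fun_prop))

theorem isClosed_and_isDiscrete_span_int {ι E : Type*} [Fintype ι] [NormedAddCommGroup E]
    [NormedSpace ℝ E] [FiniteDimensional ℝ E] {v : ι → E} (hv : LinearIndependent ℝ v)
    (hcard : Fintype.card ι = Module.finrank ℝ E) :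
    IsClosed (span ℤ (Set.range v) : Set E) ∧ IsDiscrete (span ℤ (Set.range v) : Set E) := by
  set b := basisOfLinearIndependentOfCardEqFinrank' v hv hcard
  rw [← coe_basisOfLinearIndependentOfCardEqFinrank' v hv hcard]
  exact ⟨AddSubgroup.isClosed_of_discrete (H := (span ℤ (Set.range b)).toAddSubgroup),
    SetLike.isDiscrete_iff_discreteTopology.2 inferInstance⟩

section RotationLattice

variable {k : Type*} [Field k]

def rotationLattice (u a : k) : Submodule ℤ k :=
  span ℤ {(1 - u⁻¹) * a, (1 - u) * a}

theorem mul_mem_rotationLattice {u a x : k} (hu : u ^ 2 = -1) (hx : x ∈ rotationLattice u a) :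
    u * x ∈ rotationLattice u a := by
  have hinv : u⁻¹ = -u := inv_eq_of_mul_eq_one_right (by linear_combination -hu)
  suffices rotationLattice u a ≤ (rotationLattice u a).comap (LinearMap.mulLeft ℤ u) from this hx
  refine span_le.2 ?_
  rintro _ (rfl | rfl) <;> rw [SetLike.mem_coe, mem_comap, LinearMap.mulLeft_apply]
  · rw [show u * ((1 - u⁻¹) * a) = -((1 - u) * a) by rw [hinv]; linear_combination a * hu]
    exact neg_mem (subset_span (by simp))
  · rw [show u * ((1 - u) * a) = (1 - u⁻¹) * a by rw [hinv]; linear_combination -a * hu]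
    exact subset_span (by simp)

theorem pow_mul_mem_rotationLattice {u a x : k} (hu : u ^ 2 = -1) (hx : x ∈ rotationLattice u a)
    (n : ℕ) : u ^ n * x ∈ rotationLattice u a := by
  induction n with
  | zero => simpa using hx
  | succ n ih => simpa [pow_succ', mul_assoc] using mul_mem_rotationLattice hu ih

theorem isOfFinOrder_of_sq_eq_neg_one {u : kˣ} (hu : (u : k) ^ 2 = -1) : IsOfFinOrder u :=
  isOfFinOrder_iff_pow_eq_one.2
    ⟨4, by norm_num, Units.ext (by push_cast; linear_combination ((u : k) ^ 2 - 1) * hu)⟩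

theorem zpowers_mul_mem_rotationLattice {u : kˣ} {a : k} (hu : (u : k) ^ 2 = -1) :
    ∀ c ∈ Subgroup.zpowers u, ∀ x ∈ rotationLattice (u : k) a,
      (c : k) * x ∈ rotationLattice (u : k) a := by
  rintro c hc x hx
  obtain ⟨n, rfl⟩ := (isOfFinOrder_of_sq_eq_neg_one hu).mem_powers_iff_mem_zpowers.2 hc
  simpa using pow_mul_mem_rotationLattice hu hx n

end RotationLattice

namespace Complex

theorem linearIndependent_rotationLattice_gens {u a : ℂ} (hu : u ^ 2 = -1) (ha : a ≠ 0) :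
    LinearIndependent ℝ ![(1 - u⁻¹) * a, (1 - u) * a] := by
  have hI : u = I ∨ u = -I := by
    have : (u - I) * (u + I) = 0 := by linear_combination hu - I_sq
    simpa [sub_eq_zero, add_eq_zero_iff_eq_neg] using this
  refine LinearIndependent.pair_iff.2 fun s t hst => ?_
  simp only [real_smul, ← mul_assoc, ← add_mul, mul_eq_zero, ha, or_false] at hst
  rcases hI with rfl | rfl <;>
    simp [Complex.ext_iff] at hst <;> constructor <;> linarith

theorem isClosed_and_isDiscrete_rotationLattice {u a : ℂ} (hu : u ^ 2 = -1) (ha : a ≠ 0) :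
    IsClosed (rotationLattice u a : Set ℂ) ∧ IsDiscrete (rotationLattice u a : Set ℂ) := by
  have := isClosed_and_isDiscrete_span_int (linearIndependent_rotationLattice_gens hu ha)
    (by simp [finrank_real_complex])
  rwa [Matrix.range_cons_cons_empty] at this

theorem exp_mul_I_sq_eq_neg_one {θ : ℝ} (hθ : ∃ k : ℤ, θ = Real.pi / 2 + k * Real.pi) :
    exp (θ * I) ^ 2 = -1 := by
  obtain ⟨n, rfl⟩ := hθ
  rw [← exp_nat_mul]
  have : ((2 : ℕ) : ℂ) * ((Real.pi / 2 + n * Real.pi : ℝ) * I)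
      = Real.pi * I + n * (2 * Real.pi * I) := by
    push_cast; ring
  rw [this, exp_add, exp_pi_mul_I, exp_int_mul_two_pi_mul_I]
  ring

end Complex

/-- For θ ∈ π/2 + πℤ, a ∈ ℂ*, and G generated by h(z) = e^{iθ}z and
f(z) = e^{iθ}(z−a)+a, the lattice L = ℤ(1−e^{−iθ})a + ℤ(1−e^{iθ})a is invariant
under h and f, so G(0) ⊆ L; in particular every orbit of G is discrete. -/
theorem stmt15 (θ : ℝ) (hθ : ∃ k : ℤ, θ = Real.pi / 2 + k * Real.pi)
    (a : ℂ) (ha : a ≠ 0) (h f : ℂ ≃ᵃ[ℂ] ℂ)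
    (hh : ∀ z, h z = Complex.exp (θ * Complex.I) * z)
    (hf : ∀ z, f z = Complex.exp (θ * Complex.I) * (z - a) + a) :
    let L : Set ℂ := {w | ∃ n m : ℤ,
      w = n • ((1 - Complex.exp (-θ * Complex.I)) * a)
        + m • ((1 - Complex.exp (θ * Complex.I)) * a)}
    (∀ z ∈ L, h z ∈ L ∧ f z ∈ L) ∧
    {w : ℂ | ∃ g ∈ Subgroup.closure {h, f}, g 0 = w} ⊆ L ∧
    ∀ z : ℂ, DiscreteTopology {w : ℂ // ∃ g ∈ Subgroup.closure {h, f}, g z = w} := by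
  intro L
  have hu := Complex.exp_mul_I_sq_eq_neg_one hθ
  set u : ℂˣ := Units.mk0 _ (Complex.exp_ne_zero (θ * Complex.I))
  have hL : L = rotationLattice (u : ℂ) a := by
    ext w
    simp only [L, rotationLattice, neg_mul, Complex.exp_neg, SetLike.mem_coe, mem_span_pair]
    exact exists₂_congr fun n m => eq_comm
  set G := latticeAffineSubgroup (Subgroup.zpowers u) _
    (zpowers_mul_mem_rotationLattice (a := a) hu)
  have hhG : h ∈ G := ⟨u, Subgroup.mem_zpowers u, 0, zero_mem _, fun z => by simp [u, hh]⟩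
  have hfG : f ∈ G := ⟨u, Subgroup.mem_zpowers u, (1 - u) * a, subset_span (by simp),
    fun z => by simp only [u, hf, Units.val_mk0]; ring⟩
  have hG : Subgroup.closure {h, f} ≤ G := by
    rw [Subgroup.closure_le]
    rintro g (rfl | rfl) <;> assumption
  rw [hL]
  refine ⟨fun z hz => ⟨apply_mem_of_mem_latticeAffineSubgroup hhG hz,
    apply_mem_of_mem_latticeAffineSubgroup hfG hz⟩, ?_, fun z => ?_⟩
  · rintro _ ⟨g, hg, rfl⟩
    exact apply_mem_of_mem_latticeAffineSubgroup (hG hg) (zero_mem _)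
  · obtain ⟨hclosed, hdiscrete⟩ := Complex.isClosed_and_isDiscrete_rotationLattice hu ha
    have hfinite := (isOfFinOrder_of_sq_eq_neg_one (u := u) hu).finite_zpowers
    refine ((hdiscrete.biUnion_preimage_sub hclosed hfinite
      fun c => (c : ℂ) * z).mono ?_).to_subtype
    rintro _ ⟨g, hg, rfl⟩
    obtain ⟨c, hc, hgc⟩ := exists_apply_sub_mul_mem_of_mem_latticeAffineSubgroup (hG hg) z
    exact Set.mem_biUnion hc hgc
end
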